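/- For p ≥ 1, the smallest signless p-Laplacian eigenvalue satisfies (2/Δ)^{p-1}·(ψ(G)/p)^p ≤ q_p(G), where Δ is the maximum degree of G. -/

import Mathlib

open Finset

variable {V : Type*}

/-- Signless p-Laplacian form: `Q_p(x) = Σ_{{i,j}∈E} |x_i + x_j|^p`. -/
noncomputable def Qp [Fintype V] (G : SimpleGraph V) [Fintype G.edgeSet] (p : ℝ)
    (x : V → ℝ) : ℝ :=
  ∑ e ∈ G.edgeFinset,
    Sym2.lift ⟨fun i j => |x i + x j| ^ p, fun i j => by simp [add_comm]⟩ e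

/-- The p-norm unit sphere condition. -/
def unitSphere [Fintype V] (p : ℝ) (x : V → ℝ) : Prop := ∑ i, |x i| ^ p = 1

/-- Smallest signless p-Laplacian eigenvalue. -/
noncomputable def qp [Fintype V] (G : SimpleGraph V) [Fintype G.edgeSet] (p : ℝ) : ℝ :=
  sInf {r | ∃ x : V → ℝ, unitSphere p x ∧ Qp G p x = r}

/-- Largest signless p-Laplacian eigenvalue. -/
noncomputable def lamp [Fintype V] (G : SimpleGraph V) [Fintype G.edgeSet] (p : ℝ) : ℝ :=
  sSup {r | ∃ x : V → ℝ, unitSphere p x ∧ Qp G p x = r}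

open Classical in
/-- Number of edges with both endpoints in `S`. -/
noncomputable def eIn [Fintype V] (G : SimpleGraph V) [Fintype G.edgeSet] (S : Finset V) : ℕ :=
  (G.edgeFinset.filter fun e => ∀ v ∈ e, v ∈ S).card

open Classical in
/-- Number of edges with exactly one endpoint in `U`. -/
noncomputable def cutN [Fintype V] (G : SimpleGraph V) [Fintype G.edgeSet] (U : Finset V) : ℕ :=
  (G.edgeFinset.filter fun e => (∃ v ∈ e, v ∈ U) ∧ (∃ w ∈ e, w ∉ U)).card

/-- Desai–Rao bipartiteness parameter ψ(G). -/
noncomputable def psi [Fintype V] [DecidableEq V] (G : SimpleGraph V) [Fintype G.edgeSet] : ℝ :=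
  sInf {r | ∃ S T : Finset V, Disjoint S T ∧ (S ∪ T).Nonempty ∧
    r = (2 * eIn G S + 2 * eIn G T + cutN G (S ∪ T)) / (S ∪ T).card}

open Classical in
/-- `h_g(U)`: min over thresholds `0 ≤ t < max g` of `cut(C_t)/|C_t|` where `C_t = {i : g i > t}`. -/
noncomputable def hgC [Fintype V] [DecidableEq V] (G : SimpleGraph V) [Fintype G.edgeSet]
    (g : V → ℝ) : ℝ :=
  sInf {r | ∃ t : ℝ, 0 ≤ t ∧ t < sSup (Set.range g) ∧
    r = (cutN G (univ.filter fun i => t < g i) : ℝ) / (univ.filter fun i => t < g i).card}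

/-- Eigenpair of the signless p-Laplacian. -/
def IsEigenpair [Fintype V] (G : SimpleGraph V) [DecidableRel G.Adj] (p : ℝ)
    (x : V → ℝ) (μ : ℝ) : Prop :=
  ∀ k, ∑ j ∈ G.neighborFinset k, Real.sign (x k + x j) * |x k + x j| ^ (p - 1)
      = μ * (Real.sign (x k) * |x k| ^ (p - 1))

/-- Vertex bipartiteness: minimum number of vertices to delete to make `G` bipartite. -/
noncomputable def nuG [Fintype V] [DecidableEq V] (G : SimpleGraph V) : ℕ :=
  sInf {k | ∃ S : Finset V, S.card = k ∧ ((SimpleGraph.induce ((↑S : Set V)ᶜ) G).Colorable 2)}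

/-!
For `x` on the unit `ℓ^p` sphere put `y i = sign (x i) * |x i| ^ p`, so that `∑ i, |y i| = 1`.
Cutting `y` at every level `s > 0` into `S_s = {y > s}` and `T_s = {y < -s}` and integrating the
defining inequality of `ψ` over `s` gives the discrete coarea bound `ψ ≤ ∑_{ij ∈ E} |y i + y j|`.
Each edge term is at most `p |x i + x j| ((|x i| ^ p + |x j| ^ p) / 2) ^ ((p - 1) / p)`: for
opposite signs this is a Hermite–Hadamard estimate of `∫ t ^ (p - 1)`, for equal signs a power-mean
estimate. Hölder's inequality and `∑_{ij ∈ E} (|x i| ^ p + |x j| ^ p) ≤ Δ` then bound the sum by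
`p Q_p(x) ^ (1 / p) (Δ / 2) ^ ((p - 1) / p)`.
-/

open Set MeasureTheory Real

lemma two_rpow_sub_one_div_le {p : ℝ} (hp : 1 ≤ p) : (2 : ℝ) ^ ((p - 1) / p) ≤ p := by
  have hp0 : 0 < p := by linarith
  calc (2 : ℝ) ^ ((p - 1) / p) = (1 + 1) ^ ((p - 1) / p) := by norm_num
    _ ≤ 1 + (p - 1) / p * 1 :=
        rpow_one_add_le_one_add_mul_self (s := 1) (by norm_num) (by positivity)
          ((div_le_one hp0).2 (by linarith))
    _ ≤ p := by
        rw [mul_one, ← sub_nonneg]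
        have : p - (1 + (p - 1) / p) = (p - 1) ^ 2 / p := by field_simp; ring
        rw [this]
        positivity

lemma rpow_add_div_two_le {r a b : ℝ} (hr : 1 ≤ r) (ha : 0 ≤ a) (hb : 0 ≤ b) :
    ((a + b) / 2) ^ r ≤ (a ^ r + b ^ r) / 2 := by
  have h := (convexOn_rpow hr).2 (mem_Ici.2 ha) (mem_Ici.2 hb) (by norm_num : (0 : ℝ) ≤ 1 / 2)
    (by norm_num : (0 : ℝ) ≤ 1 / 2) (by norm_num)
  simp only [smul_eq_mul] at h
  rwa [show 1 / 2 * a + 1 / 2 * b = (a + b) / 2 by ring,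
    show 1 / 2 * a ^ r + 1 / 2 * b ^ r = (a ^ r + b ^ r) / 2 by ring] at h

lemma rpow_add_rpow_le_mul_rpow_mean {p A B : ℝ} (hp : 1 ≤ p) (hA : 0 ≤ A) (hB : 0 ≤ B) :
    A ^ p + B ^ p ≤ p * (A + B) * ((A ^ p + B ^ p) / 2) ^ ((p - 1) / p) := by
  have hp0 : 0 < p := by linarith
  set S := A ^ p + B ^ p
  have hS : 0 ≤ S := by positivity
  have hsplit : S = S ^ ((p - 1) / p) * S ^ (1 / p) := by
    rw [← rpow_add' hS (by rw [← add_div, sub_add_cancel, div_self hp0.ne']; norm_num), ← add_div,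
      sub_add_cancel, div_self hp0.ne', rpow_one]
  have hhalf : 2 ^ ((p - 1) / p) * (S / 2) ^ ((p - 1) / p) = S ^ ((p - 1) / p) := by
    rw [← mul_rpow zero_le_two (by positivity), mul_div_cancel₀ _ two_ne_zero]
  calc S = 2 ^ ((p - 1) / p) * S ^ (1 / p) * (S / 2) ^ ((p - 1) / p) := by
        rw [mul_right_comm, hhalf, ← hsplit]
    _ ≤ p * (A + B) * (S / 2) ^ ((p - 1) / p) := by
        gcongr
        · exact two_rpow_sub_one_div_le hp
        · exact rpow_add_rpow_le_add hA hB hp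

lemma ConcaveOn.add_reflect_le {f : ℝ → ℝ} {s : Set ℝ} {a b t : ℝ} (hf : ConcaveOn ℝ s f)
    (ht : t ∈ s) (ht' : a + b - t ∈ s) : f t + f (a + b - t) ≤ 2 * f ((a + b) / 2) := by
  have h := hf.2 ht ht' (by norm_num : (0 : ℝ) ≤ 1 / 2) (by norm_num : (0 : ℝ) ≤ 1 / 2)
    (by norm_num)
  simp only [smul_eq_mul] at h
  rw [show 1 / 2 * t + 1 / 2 * (a + b - t) = (a + b) / 2 by ring] at h
  linarith

lemma ConvexOn.add_reflect_le {f : ℝ → ℝ} {a b t : ℝ} (hf : ConvexOn ℝ (Icc a b) f)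
    (ht : t ∈ Icc a b) : f t + f (a + b - t) ≤ f a + f b := by
  obtain rfl | hab := (ht.1.trans ht.2).eq_or_lt
  · obtain rfl : t = a := le_antisymm ht.2 ht.1
    simp
  have hba : 0 < b - a := sub_pos.2 hab
  have hθ : 0 ≤ (b - t) / (b - a) := div_nonneg (by linarith [ht.2]) hba.le
  have hθ' : 0 ≤ (t - a) / (b - a) := div_nonneg (by linarith [ht.1]) hba.le
  have hsum : (b - t) / (b - a) + (t - a) / (b - a) = 1 := by field_simp; ring
  have ha := Set.left_mem_Icc.2 hab.le
  have hb := Set.right_mem_Icc.2 hab.le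
  have h₁ := hf.2 ha hb hθ hθ' hsum
  have h₂ := hf.2 ha hb hθ' hθ (by rw [add_comm, hsum])
  simp only [smul_eq_mul] at h₁ h₂
  rw [show (b - t) / (b - a) * a + (t - a) / (b - a) * b = t by field_simp; ring] at h₁
  rw [show (t - a) / (b - a) * a + (b - t) / (b - a) * b = a + b - t by field_simp; ring] at h₂
  calc f t + f (a + b - t) ≤ ((b - t) / (b - a) + (t - a) / (b - a)) * (f a + f b) := by
        linarith
    _ = f a + f b := by rw [hsum, one_mul]

lemma intervalIntegral_le_of_add_reflect_le {f : ℝ → ℝ} {a b C : ℝ} (hab : a ≤ b)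
    (hf : IntervalIntegrable f volume a b) (h : ∀ t ∈ Icc a b, f t + f (a + b - t) ≤ 2 * C) :
    ∫ t in a..b, f t ≤ (b - a) * C := by
  have hf' : IntervalIntegrable (fun t => f (a + b - t)) volume a b := by
    simpa using (hf.comp_sub_left (a + b)).symm
  have hreflect : ∫ t in a..b, f (a + b - t) = ∫ t in a..b, f t := by
    simp [intervalIntegral.integral_comp_sub_left]
  have := intervalIntegral.integral_mono_on hab (hf.add hf') intervalIntegrable_const h
  rw [intervalIntegral.integral_add hf hf', hreflect, intervalIntegral.integral_const,
    smul_eq_mul] at this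
  linarith

lemma ConcaveOn.intervalIntegral_le_sub_mul_midpoint {f : ℝ → ℝ} {a b : ℝ} (hab : a ≤ b)
    (hf : ConcaveOn ℝ (Icc a b) f) (hfi : IntervalIntegrable f volume a b) :
    ∫ t in a..b, f t ≤ (b - a) * f ((a + b) / 2) :=
  intervalIntegral_le_of_add_reflect_le hab hfi fun t ht =>
    hf.add_reflect_le ht ⟨by linarith [ht.2], by linarith [ht.1]⟩

lemma ConvexOn.intervalIntegral_le_sub_mul_endpoint_average {f : ℝ → ℝ} {a b : ℝ}
    (hab : a ≤ b) (hf : ConvexOn ℝ (Icc a b) f) (hfi : IntervalIntegrable f volume a b) :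
    ∫ t in a..b, f t ≤ (b - a) * ((f a + f b) / 2) :=
  intervalIntegral_le_of_add_reflect_le hab hfi fun t ht => by
    linarith [hf.add_reflect_le ht]

lemma integral_rpow_sub_one_le {p A B : ℝ} (hp : 1 ≤ p) (hB : 0 ≤ B) (hBA : B ≤ A) :
    ∫ t in B..A, t ^ (p - 1) ≤ (A - B) * ((A ^ p + B ^ p) / 2) ^ ((p - 1) / p) := by
  have hp0 : 0 < p := by linarith
  have hA : 0 ≤ A := hB.trans hBA
  have hsub : Icc B A ⊆ Ici 0 := fun t ht => mem_Ici.2 (hB.trans ht.1)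
  have hint : IntervalIntegrable (fun t : ℝ => t ^ (p - 1)) volume B A :=
    (continuous_rpow_const (by linarith)).intervalIntegrable B A
  have hAB : 0 ≤ A - B := sub_nonneg.2 hBA
  rcases le_total p 2 with hp2 | hp2
  · refine (ConcaveOn.intervalIntegral_le_sub_mul_midpoint hBA
      ((concaveOn_rpow (by linarith) (by linarith)).subset hsub (convex_Icc B A)) hint).trans ?_
    rw [add_comm B A]
    gcongr
    calc ((A + B) / 2) ^ (p - 1) = (((A + B) / 2) ^ p) ^ ((p - 1) / p) := by
          rw [← rpow_mul (by positivity), mul_div_cancel₀ _ hp0.ne']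
      _ ≤ ((A ^ p + B ^ p) / 2) ^ ((p - 1) / p) := by
          gcongr
          exact rpow_add_div_two_le hp hA hB
  · refine (ConvexOn.intervalIntegral_le_sub_mul_endpoint_average hBA
      ((convexOn_rpow (by linarith)).subset hsub (convex_Icc B A)) hint).trans ?_
    rw [add_comm (B ^ (p - 1))]
    gcongr
    have hq : 1 ≤ p / (p - 1) := by rw [le_div_iff₀ (by linarith)]; linarith
    have hpow : ∀ u : ℝ, 0 ≤ u → (u ^ (p - 1)) ^ (p / (p - 1)) = u ^ p := fun u hu => by
      rw [← rpow_mul hu, mul_div_cancel₀ _ (by linarith)]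
    calc (A ^ (p - 1) + B ^ (p - 1)) / 2
        = (((A ^ (p - 1) + B ^ (p - 1)) / 2) ^ (p / (p - 1))) ^ ((p - 1) / p) := by
          rw [← rpow_mul (by positivity), div_mul_div_cancel₀ (by linarith),
            div_self (by linarith), rpow_one]
      _ ≤ ((A ^ p + B ^ p) / 2) ^ ((p - 1) / p) := by
          gcongr
          simpa only [hpow A hA, hpow B hB] using
            rpow_add_div_two_le hq (rpow_nonneg hA (p - 1)) (rpow_nonneg hB (p - 1))

lemma rpow_sub_rpow_le_mul_rpow_mean {p A B : ℝ} (hp : 1 ≤ p) (hB : 0 ≤ B) (hBA : B ≤ A) :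
    A ^ p - B ^ p ≤ p * (A - B) * ((A ^ p + B ^ p) / 2) ^ ((p - 1) / p) := by
  have hp0 : 0 < p := by linarith
  have hint : A ^ p - B ^ p = p * ∫ t in B..A, t ^ (p - 1) := by
    rw [integral_rpow (Or.inl (by linarith)), sub_add_cancel, mul_div_cancel₀ _ hp0.ne']
  rw [hint, mul_assoc]
  exact mul_le_mul_of_nonneg_left (integral_rpow_sub_one_le hp hB hBA) hp0.le

lemma abs_rpow_sub_rpow_le_mul_rpow_mean {p A B : ℝ} (hp : 1 ≤ p) (hA : 0 ≤ A) (hB : 0 ≤ B) :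
    |A ^ p - B ^ p| ≤ p * |A - B| * ((A ^ p + B ^ p) / 2) ^ ((p - 1) / p) := by
  rcases le_total B A with h | h
  · rw [abs_of_nonneg (sub_nonneg.2 (rpow_le_rpow hB h (by linarith))),
      abs_of_nonneg (sub_nonneg.2 h)]
    exact rpow_sub_rpow_le_mul_rpow_mean hp hB h
  · rw [abs_sub_comm, abs_of_nonneg (sub_nonneg.2 (rpow_le_rpow hA h (by linarith))),
      abs_sub_comm, abs_of_nonneg (sub_nonneg.2 h), add_comm (A ^ p)]
    exact rpow_sub_rpow_le_mul_rpow_mean hp hA h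

noncomputable def signedRpow (p u : ℝ) : ℝ := Real.sign u * |u| ^ p

lemma signedRpow_neg (p u : ℝ) : signedRpow p (-u) = -signedRpow p u := by
  simp [signedRpow, Real.sign_neg]

lemma signedRpow_of_nonneg {p u : ℝ} (hp : 0 < p) (hu : 0 ≤ u) : signedRpow p u = u ^ p := by
  rcases hu.eq_or_lt with rfl | hu
  · simp [signedRpow, zero_rpow hp.ne']
  · rw [signedRpow, Real.sign_of_pos hu, one_mul, abs_of_pos hu]

lemma abs_signedRpow {p : ℝ} (hp : 0 < p) (u : ℝ) : |signedRpow p u| = |u| ^ p := by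
  rcases le_total 0 u with hu | hu
  · rw [signedRpow_of_nonneg hp hu, abs_of_nonneg hu, abs_of_nonneg (rpow_nonneg hu p)]
  · rw [← abs_neg, ← signedRpow_neg, signedRpow_of_nonneg hp (neg_nonneg.2 hu), abs_of_nonpos hu,
      abs_of_nonneg (rpow_nonneg (neg_nonneg.2 hu) p)]

lemma abs_signedRpow_add_le {p : ℝ} (hp : 1 ≤ p) (u v : ℝ) :
    |signedRpow p u + signedRpow p v| ≤
      p * |u + v| * ((|u| ^ p + |v| ^ p) / 2) ^ ((p - 1) / p) := by
  have hp0 : 0 < p := by linarith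
  wlog hu : 0 ≤ u generalizing u v
  · have h := this (-u) (-v) (by linarith)
    rwa [signedRpow_neg, signedRpow_neg, ← neg_add, abs_neg, ← neg_add, abs_neg, abs_neg,
      abs_neg] at h
  rw [signedRpow_of_nonneg hp0 hu, abs_of_nonneg hu]
  rcases le_total 0 v with hv | hv
  · rw [signedRpow_of_nonneg hp0 hv, abs_of_nonneg hv, abs_of_nonneg (by positivity),
      abs_of_nonneg (by positivity)]
    exact rpow_add_rpow_le_mul_rpow_mean hp hu hv
  · have hv' : v = -|v| := by rw [abs_of_nonpos hv, neg_neg]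
    rw [hv', signedRpow_neg, signedRpow_of_nonneg hp0 (abs_nonneg v), ← sub_eq_add_neg,
      ← sub_eq_add_neg, abs_neg, abs_abs]
    exact abs_rpow_sub_rpow_le_mul_rpow_mean hp hu (abs_nonneg v)

lemma inner_le_Lp_mul_rpow_sum_of_nonneg {ι : Type*} (s : Finset ι) {p : ℝ} (hp : 1 ≤ p)
    {a c : ι → ℝ} (ha : ∀ i ∈ s, 0 ≤ a i) (hc : ∀ i ∈ s, 0 ≤ c i) :
    ∑ i ∈ s, a i * c i ^ ((p - 1) / p) ≤
      (∑ i ∈ s, a i ^ p) ^ (1 / p) * (∑ i ∈ s, c i) ^ ((p - 1) / p) := by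
  rcases hp.eq_or_lt with rfl | hp
  · simp
  have hp1 : p - 1 ≠ 0 := by linarith
  convert Real.inner_le_Lp_mul_Lq_of_nonneg s ((Real.holderConjugate_iff_eq_conjExponent hp).2 rfl)
    (g := fun i => c i ^ ((p - 1) / p)) ha (fun i hi => rpow_nonneg (hc i hi) _) using 3
  · refine sum_congr rfl fun i hi => ?_
    rw [← rpow_mul (hc i hi), div_mul_div_cancel₀ (by linarith), div_self hp1,
      rpow_one]
  · rw [one_div_div]

lemma integrableOn_Ioi_zero_indicator_Iio (a : ℝ) :
    IntegrableOn ((Iio a).indicator (1 : ℝ → ℝ)) (Ioi 0) := by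
  rw [IntegrableOn, integrable_indicator_iff measurableSet_Iio, IntegrableOn,
    Measure.restrict_restrict measurableSet_Iio, Iio_inter_Ioi]
  exact integrableOn_const (by simp)

lemma setIntegral_Ioi_zero_indicator_Iio (a : ℝ) :
    ∫ s in Ioi 0, (Iio a).indicator (1 : ℝ → ℝ) s = max a 0 := by
  rw [integral_indicator_one measurableSet_Iio, measureReal_restrict_apply measurableSet_Iio,
    Iio_inter_Ioi, Real.volume_real_Ioo, sub_zero]

/-- At a threshold `s ≥ 0`, the contribution of an edge with endpoint values `a`, `b` to
`2 e(S_s) + 2 e(T_s) + cut(S_s ∪ T_s)`, where `S_s = {y > s}` and `T_s = {y < -s}`. -/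
noncomputable def edgeLevel (a b s : ℝ) : ℝ :=
  2 * (Iio (min a b)).indicator 1 s + 2 * (Iio (min (-a) (-b))).indicator 1 s +
    ((Iio (max |a| |b|)).indicator 1 s - (Iio (min |a| |b|)).indicator 1 s)

lemma edgeLevel_comm (a b : ℝ) : edgeLevel a b = edgeLevel b a := by
  funext s
  rw [edgeLevel, edgeLevel, min_comm a, min_comm (-a), max_comm |a|, min_comm |a|]

lemma integrableOn_edgeLevel (a b : ℝ) : IntegrableOn (edgeLevel a b) (Ioi 0) := by
  have h := integrableOn_Ioi_zero_indicator_Iio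
  exact (((h _).const_mul 2).add ((h _).const_mul 2)).add ((h _).sub (h _))

lemma setIntegral_edgeLevel (a b : ℝ) : ∫ s in Ioi 0, edgeLevel a b s = |a + b| := by
  have h := integrableOn_Ioi_zero_indicator_Iio
  simp only [edgeLevel]
  rw [integral_add, integral_add, integral_sub, integral_const_mul, integral_const_mul]
  · simp only [setIntegral_Ioi_zero_indicator_Iio]
    rcases le_total 0 a with ha | ha <;> rcases le_total 0 b with hb | hb <;>
      rcases le_total 0 (a + b) with hab | hab <;>
      simp only [abs_of_nonneg, abs_of_nonpos, ha, hb, hab, min_def, max_def] <;>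
      split_ifs <;> linarith
  all_goals first
    | exact h _
    | exact (h _).const_mul 2
    | exact (h _).sub (h _)
    | exact ((h _).const_mul 2).add ((h _).const_mul 2)

section Coarea

variable [Fintype V] (G : SimpleGraph V) [Fintype G.edgeSet]

noncomputable def superlevel (y : V → ℝ) (s : ℝ) : Finset V := univ.filter fun i => s < y i

lemma card_superlevel_eq_sum_indicator (y : V → ℝ) (s : ℝ) :
    (#(superlevel y s) : ℝ) = ∑ i, (Iio (y i)).indicator 1 s := by
  rw [superlevel, card_filter, Nat.cast_sum]
  simp [indicator_apply]

lemma level_counts_eq_sum_edgeLevel (y : V → ℝ) (s : ℝ) :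
    2 * eIn G (superlevel y s) + 2 * eIn G (superlevel (-y) s) +
        (cutN G (superlevel (fun i => |y i|) s) : ℝ) =
      ∑ e ∈ G.edgeFinset,
        Sym2.lift ⟨fun i j => edgeLevel (y i) (y j) s,
          fun _ _ => congrFun (edgeLevel_comm _ _) s⟩ e := by
  unfold eIn cutN
  rw [card_filter, card_filter, card_filter]
  push_cast
  rw [mul_sum, mul_sum, ← sum_add_distrib, ← sum_add_distrib]
  refine sum_congr rfl fun e _ => ?_
  induction e using Sym2.ind with
  | _ i j =>
    simp only [Sym2.lift_mk, edgeLevel, Sym2.mem_iff, forall_eq_or_imp, forall_eq,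
      exists_eq_or_imp, exists_eq_left, superlevel, Finset.mem_filter, Finset.mem_univ, true_and,
      indicator_apply, Set.mem_Iio, lt_min_iff, lt_max_iff, Pi.one_apply, Pi.neg_apply]
    congr 1
    by_cases hi : s < |y i| <;> by_cases hj : s < |y j| <;> simp [hi, hj]

variable [DecidableEq V]

lemma psi_nonneg : 0 ≤ psi G :=
  Real.sInf_nonneg (by rintro r ⟨S, T, -, -, rfl⟩; positivity)

lemma psi_mul_card_le {S T : Finset V} (hST : Disjoint S T) :
    psi G * #(S ∪ T) ≤ 2 * eIn G S + 2 * eIn G T + cutN G (S ∪ T) := by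
  rcases (S ∪ T).eq_empty_or_nonempty with h | h
  · rw [h, Finset.card_empty, Nat.cast_zero, mul_zero]
    positivity
  · have hc : (0 : ℝ) < #(S ∪ T) := by exact_mod_cast h.card_pos
    rw [← le_div_iff₀ hc]
    exact csInf_le ⟨0, by rintro r ⟨S, T, -, -, rfl⟩; positivity⟩ ⟨S, T, hST, h, rfl⟩

lemma psi_mul_card_superlevel_abs_le (y : V → ℝ) {s : ℝ} (hs : 0 ≤ s) :
    psi G * #(superlevel (fun i => |y i|) s) ≤
      2 * eIn G (superlevel y s) + 2 * eIn G (superlevel (-y) s) +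
        cutN G (superlevel (fun i => |y i|) s) := by
  have hU : superlevel y s ∪ superlevel (-y) s = superlevel (fun i => |y i|) s := by
    ext i
    simp [superlevel, lt_abs]
  have hD : Disjoint (superlevel y s) (superlevel (-y) s) :=
    disjoint_filter.2 fun i _ h₁ h₂ => by simp only [Pi.neg_apply] at h₂; linarith
  simpa only [hU] using psi_mul_card_le G hD

theorem psi_mul_sum_abs_le_sum_edges (y : V → ℝ) :
    psi G * ∑ i, |y i| ≤
      ∑ e ∈ G.edgeFinset,
        Sym2.lift ⟨fun i j => |y i + y j|, fun _ _ => by simp only [add_comm]⟩ e := by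
  let F : Sym2 V → ℝ → ℝ := fun e s =>
    Sym2.lift ⟨fun i j => edgeLevel (y i) (y j) s, fun _ _ => congrFun (edgeLevel_comm _ _) s⟩ e
  have hF : ∀ e, IntegrableOn (F e) (Ioi 0) := Sym2.ind fun _ _ => integrableOn_edgeLevel _ _
  have hN : ∀ i, IntegrableOn ((Iio |y i|).indicator (1 : ℝ → ℝ)) (Ioi 0) := fun i =>
    integrableOn_Ioi_zero_indicator_Iio _
  calc psi G * ∑ i, |y i|
      = ∫ s in Ioi 0, psi G * ∑ i, (Iio |y i|).indicator 1 s := by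
        rw [integral_const_mul, integral_finsetSum _ fun i _ => hN i]
        simp only [setIntegral_Ioi_zero_indicator_Iio, abs_nonneg, max_eq_left]
    _ ≤ ∫ s in Ioi 0, ∑ e ∈ G.edgeFinset, F e s := by
        refine setIntegral_mono_on ((integrable_finsetSum _ fun i _ => hN i).const_mul _)
          (integrable_finsetSum _ fun e _ => hF e) measurableSet_Ioi fun s hs => ?_
        rw [← card_superlevel_eq_sum_indicator, ← level_counts_eq_sum_edgeLevel]
        exact psi_mul_card_superlevel_abs_le G y (le_of_lt hs)
    _ = ∑ e ∈ G.edgeFinset, ∫ s in Ioi 0, F e s := integral_finsetSum _ fun e _ => hF e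
    _ = _ := sum_congr rfl fun e _ => by
        induction e using Sym2.ind with
        | _ i j => exact setIntegral_edgeLevel _ _

end Coarea

section Handshake

variable [Fintype V] [DecidableEq V] (G : SimpleGraph V) [DecidableRel G.Adj]

lemma sum_edgeFinset_lift_add (f : V → ℝ) :
    ∑ e ∈ G.edgeFinset, Sym2.lift ⟨fun i j => f i + f j, fun _ _ => add_comm _ _⟩ e =
      ∑ v, G.degree v * f v := by
  have hedge : ∀ e ∈ G.edgeFinset,
      Sym2.lift ⟨fun i j => f i + f j, fun _ _ => add_comm _ _⟩ e =
        ∑ v, if v ∈ e then f v else 0 := by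
    intro e he
    induction e using Sym2.ind with
    | _ i j =>
      have hij : i ≠ j := G.ne_of_adj (by simpa using he)
      rw [← sum_filter, show ({v | v ∈ s(i, j)} : Finset V) = {i, j} by ext; simp,
        sum_pair hij, Sym2.lift_mk]
  rw [sum_congr rfl hedge, sum_comm]
  refine sum_congr rfl fun v _ => ?_
  rw [← sum_filter, sum_const, ← G.incidenceFinset_eq_filter, G.card_incidenceFinset_eq_degree,
    nsmul_eq_mul]

lemma sum_edgeFinset_lift_add_le {f : V → ℝ} (hf : ∀ v, 0 ≤ f v) :
    ∑ e ∈ G.edgeFinset, Sym2.lift ⟨fun i j => f i + f j, fun _ _ => add_comm _ _⟩ e ≤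
      G.maxDegree * ∑ v, f v := by
  rw [sum_edgeFinset_lift_add, mul_sum]
  exact sum_le_sum fun v _ => mul_le_mul_of_nonneg_right
    (by exact_mod_cast G.degree_le_maxDegree v) (hf v)

end Handshake

lemma Qp_nonneg [Fintype V] (G : SimpleGraph V) [Fintype G.edgeSet] (p : ℝ)
    (x : V → ℝ) : 0 ≤ Qp G p x :=
  sum_nonneg fun e _ => by
    induction e using Sym2.ind with
    | _ i j => exact rpow_nonneg (abs_nonneg _) p

theorem psi_le_mul_Qp_rpow [Fintype V] [DecidableEq V] (G : SimpleGraph V)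
    [DecidableRel G.Adj] {p : ℝ} (hp : 1 ≤ p) {x : V → ℝ} (hx : unitSphere p x) :
    psi G ≤ p * Qp G p x ^ (1 / p) * ((G.maxDegree : ℝ) / 2) ^ ((p - 1) / p) := by
  have hp0 : 0 < p := by linarith
  let a : Sym2 V → ℝ := Sym2.lift ⟨fun i j => |x i + x j|, fun _ _ => by simp only [add_comm]⟩
  let c : Sym2 V → ℝ := fun e =>
    Sym2.lift ⟨fun i j => |x i| ^ p + |x j| ^ p, fun _ _ => add_comm _ _⟩ e / 2
  have ha : ∀ e, 0 ≤ a e := Sym2.ind fun _ _ => abs_nonneg _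
  have hc : ∀ e, 0 ≤ c e := Sym2.ind fun i j =>
    show 0 ≤ (|x i| ^ p + |x j| ^ p) / 2 by positivity
  have hsum_a : ∑ e ∈ G.edgeFinset, a e ^ p = Qp G p x :=
    sum_congr rfl fun e _ => by induction e using Sym2.ind with | _ i j => rfl
  have hsum_c : ∑ e ∈ G.edgeFinset, c e ≤ G.maxDegree / 2 := by
    rw [← sum_div]
    gcongr
    simpa only [show ∑ v, |x v| ^ p = 1 from hx, mul_one] using
      sum_edgeFinset_lift_add_le G fun v => rpow_nonneg (abs_nonneg (x v)) p
  have hy : ∑ i, |signedRpow p (x i)| = 1 := by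
    simp only [abs_signedRpow hp0]
    exact hx
  calc psi G = psi G * ∑ i, |signedRpow p (x i)| := by rw [hy, mul_one]
    _ ≤ ∑ e ∈ G.edgeFinset, Sym2.lift ⟨fun i j => |signedRpow p (x i) + signedRpow p (x j)|,
          fun _ _ => by simp only [add_comm]⟩ e :=
        psi_mul_sum_abs_le_sum_edges G _
    _ ≤ ∑ e ∈ G.edgeFinset, p * (a e * c e ^ ((p - 1) / p)) := sum_le_sum fun e _ => by
        induction e using Sym2.ind with
        | _ i j => exact (abs_signedRpow_add_le hp _ _).trans_eq (mul_assoc _ _ _)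
    _ = p * ∑ e ∈ G.edgeFinset, a e * c e ^ ((p - 1) / p) := (mul_sum _ _ _).symm
    _ ≤ p * ((∑ e ∈ G.edgeFinset, a e ^ p) ^ (1 / p) *
          (∑ e ∈ G.edgeFinset, c e) ^ ((p - 1) / p)) := by
        gcongr
        exact inner_le_Lp_mul_rpow_sum_of_nonneg _ hp (fun e _ => ha e) (fun e _ => hc e)
    _ ≤ p * Qp G p x ^ (1 / p) * ((G.maxDegree : ℝ) / 2) ^ ((p - 1) / p) := by
        rw [hsum_a, ← mul_assoc]
        refine mul_le_mul_of_nonneg_left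
          (rpow_le_rpow (sum_nonneg fun e _ => hc e) hsum_c (div_nonneg (by linarith) hp0.le)) ?_
        exact mul_nonneg hp0.le (rpow_nonneg (Qp_nonneg G p x) _)

lemma rpow_div_le_of_le_mul_rpow {p ψ Q D : ℝ} (hp : 1 ≤ p) (hψ : 0 ≤ ψ) (hQ : 0 ≤ Q)
    (hD : 0 < D) (h : ψ ≤ p * Q ^ (1 / p) * (D / 2) ^ ((p - 1) / p)) :
    (2 / D) ^ (p - 1) * (ψ / p) ^ p ≤ Q := by
  have hp0 : 0 < p := by linarith
  have hψp : ψ / p ≤ Q ^ (1 / p) * (D / 2) ^ ((p - 1) / p) := by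
    rw [div_le_iff₀ hp0]; linarith
  have hpow : (ψ / p) ^ p ≤ Q * (D / 2) ^ (p - 1) := by
    calc (ψ / p) ^ p ≤ (Q ^ (1 / p) * (D / 2) ^ ((p - 1) / p)) ^ p := by gcongr
      _ = Q * (D / 2) ^ (p - 1) := by
        rw [mul_rpow (by positivity) (by positivity), ← rpow_mul hQ,
          ← rpow_mul (by positivity), one_div_mul_cancel hp0.ne',
          div_mul_cancel₀ _ hp0.ne', rpow_one]
  calc (2 / D) ^ (p - 1) * (ψ / p) ^ p ≤ (2 / D) ^ (p - 1) * (Q * (D / 2) ^ (p - 1)) := by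
        gcongr
    _ = Q := by
        rw [mul_left_comm, ← mul_rpow (by positivity) (by positivity),
          div_mul_div_comm, mul_comm 2 D, div_self (by positivity), one_rpow, mul_one]

theorem stmt_3 [Fintype V] [DecidableEq V] (G : SimpleGraph V) [DecidableRel G.Adj]
    (hE : G.edgeFinset.Nonempty) (p : ℝ) (hp : 1 ≤ p) :
    ((2 : ℝ) / G.maxDegree) ^ (p - 1) * (psi G / p) ^ p ≤ qp G p := by
  obtain ⟨e, he⟩ := hE
  induction e using Sym2.ind with
  | _ v w =>
    have hΔ : (0 : ℝ) < G.maxDegree := by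
      exact_mod_cast ((G.degree_pos_iff_exists_adj v).2 ⟨w, by simpa using he⟩).trans_le
        (G.degree_le_maxDegree v)
    have hunit : unitSphere p (Pi.single v 1) := by
      simp [unitSphere, Pi.single_apply, apply_ite (fun t : ℝ => |t| ^ p),
        zero_rpow (by linarith : p ≠ 0)]
    refine le_csInf ⟨_, _, hunit, rfl⟩ ?_
    rintro _ ⟨x, hx, rfl⟩
    exact rpow_div_le_of_le_mul_rpow hp (psi_nonneg G) (Qp_nonneg G p x) hΔ
      (psi_le_mul_Qp_rpow G hp hx)
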